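/- arXiv:1103.2209 — 2 statements merged into one kernel-verified Lean document; each statement's English description precedes it below -/
import Mathlib

section
/- Let y ∈ ℝⁿ with y[i] ≥ 0, H : ℝⁿ → ℝⁿ and Φ : ℝᴸ → ℝⁿ linear, γ > 0, Ψ : ℝᴸ → ℝ continuous, nonnegative and coercive, and suppose there exists α₀ with J(α₀) < +∞. Then J attains its infimum: there exists α* ∈ ℝᴸ with J(α*) < +∞ and J(α*) ≤ J(α) for all α ∈ ℝᴸ. -/
/-- Scalar Poisson negative log-likelihood `f_pois(y,·) : ℝ → (-∞,+∞]`. -/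
noncomputable def fpois (y t : ℝ) : EReal :=
  if 0 < y then (if 0 < t then ((-y * Real.log t + t : ℝ) : EReal) else ⊤)
  else (if 0 ≤ t then ((t : ℝ) : EReal) else ⊤)

/-- Poisson data-fidelity term `f₁(η) = Σᵢ f_pois(y[i], η[i])`. -/
noncomputable def f1 {n : ℕ} (y : Fin n → ℝ) (η : EuclideanSpace ℝ (Fin n)) : EReal :=
  ∑ i, fpois (y i) (η i)

/-- Indicator function of a set, `0` on the set, `+∞` off it. -/
noncomputable def indC {E : Type*} (C : Set E) (w : E) : EReal :=
  open Classical in if w ∈ C then 0 else ⊤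

/-- The objective `J(α) = f₁(HΦα) + γΨ(α) + ι_C(Φα)`, `C` the nonnegative orthant. -/
noncomputable def J {n L : ℕ} (y : Fin n → ℝ)
    (H : EuclideanSpace ℝ (Fin n) →ₗ[ℝ] EuclideanSpace ℝ (Fin n))
    (Φ : EuclideanSpace ℝ (Fin L) →ₗ[ℝ] EuclideanSpace ℝ (Fin n)) (γ : ℝ)
    (Ψ : EuclideanSpace ℝ (Fin L) → ℝ) (α : EuclideanSpace ℝ (Fin L)) : EReal :=
  f1 y (H (Φ α)) + ((γ * Ψ α : ℝ) : EReal)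
    + indC {x : EuclideanSpace ℝ (Fin n) | ∀ i, 0 ≤ x i} (Φ α)

/-!
Each summand `f_pois(y, ·)` is lower semicontinuous (near `0` it is `+∞` on the left and tends
to its value at `0` from the right) and bounded below by `y - y log y`, the indicator of the
closed orthant is lower semicontinuous, and `γΨ` is continuous; so `J` is lower semicontinuous
and `J(α) ≥ c + γΨ(α)` for a constant `c`. Coercivity of `Ψ` then forces `J(α) ≥ J(α₀)` outside
a compact ball, and a lower semicontinuous function attains its minimum on a compact set.
-/

open Filter Topology Set

theorem LowerSemicontinuous.exists_forall_le' {α β : Type*} [TopologicalSpace α] [LinearOrder β]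
    {f : α → β} (hf : LowerSemicontinuous f) (x₀ : α) (h : ∀ᶠ x in cocompact α, f x₀ ≤ f x) :
    ∃ x, ∀ y, f x ≤ f y := by
  obtain ⟨K, hK, hKf⟩ := hasBasis_cocompact.eventually_iff.1 h
  obtain ⟨x, -, hx⟩ := (hf.lowerSemicontinuousOn _).exists_isMinOn (insert_nonempty x₀ K)
    (hK.insert x₀)
  refine ⟨x, fun y => ?_⟩
  by_cases hyK : y ∈ K
  exacts [hx (mem_insert_of_mem _ hyK), (hx (mem_insert x₀ K)).trans (hKf hyK)]

theorem lowerSemicontinuousAt_of_tendsto_nhdsGT {α β : Type*} [TopologicalSpace α]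
    [LinearOrder α] [OrderTopology α] [TopologicalSpace β] [LinearOrder β] [OrderTopology β]
    {f : α → β} {x : α} (hle : ∀ t ≤ x, f x ≤ f t) (h : Tendsto f (𝓝[>] x) (𝓝 (f x))) :
    LowerSemicontinuousAt f x := by
  intro b hb
  rw [← nhdsLE_sup_nhdsGT, eventually_sup]
  exact ⟨eventually_nhdsWithin_of_forall fun t ht => hb.trans_le (hle t ht), h (lt_mem_nhds hb)⟩

namespace EReal

theorem coe_finset_sum {ι : Type*} (s : Finset ι) (f : ι → ℝ) :
    ((∑ i ∈ s, f i : ℝ) : EReal) = ∑ i ∈ s, (f i : EReal) :=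
  map_sum (⟨⟨(↑), coe_zero⟩, coe_add⟩ : ℝ →+ EReal) f s

variable {α : Type*} [TopologicalSpace α]

/-- At the points where `EReal` addition is discontinuous the sum is `⊥`. -/
theorem lowerSemicontinuous_fun_add {f g : α → EReal} (hf : LowerSemicontinuous f)
    (hg : LowerSemicontinuous g) : LowerSemicontinuous fun x => f x + g x := by
  intro x
  by_cases hfx : f x = ⊥
  · intro b hb; simp [hfx] at hb
  by_cases hgx : g x = ⊥
  · intro b hb; simp [hgx] at hb
  exact LowerSemicontinuousAt.add' (hf x) (hg x) (continuousAt_add (.inr hgx) (.inl hfx))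

theorem lowerSemicontinuous_sum {ι : Type*} {f : ι → α → EReal} {s : Finset ι}
    (hf : ∀ i ∈ s, LowerSemicontinuous (f i)) :
    LowerSemicontinuous fun x => ∑ i ∈ s, f i x := by
  classical
  induction s using Finset.induction_on with
  | empty => simpa using lowerSemicontinuous_const
  | insert i s hi ih =>
    simp only [Finset.sum_insert hi]
    exact lowerSemicontinuous_fun_add (hf i (Finset.mem_insert_self i s))
      (ih fun j hj => hf j (Finset.mem_insert_of_mem hj))

end EReal

theorem indC_eq_indicator_compl {E : Type*} (C : Set E) : indC C = Cᶜ.indicator fun _ => ⊤ := by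
  classical
  ext w
  by_cases hw : w ∈ C <;> simp [indC, hw]

theorem indC_nonneg {E : Type*} (C : Set E) (w : E) : 0 ≤ indC C w :=
  indC_eq_indicator_compl C ▸ indicator_nonneg (fun _ _ => le_top) w

theorem IsClosed.lowerSemicontinuous_indC {E : Type*} [TopologicalSpace E] {C : Set E}
    (hC : IsClosed C) :
    LowerSemicontinuous (indC C) :=
  indC_eq_indicator_compl C ▸ hC.isOpen_compl.lowerSemicontinuous_indicator le_top

section Poisson

variable {y t : ℝ}

theorem fpois_of_pos (hy : 0 ≤ y) (ht : 0 < t) :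
    fpois y t = ((-y * Real.log t + t : ℝ) : EReal) := by
  rcases hy.lt_or_eq with hy | rfl
  · simp [fpois, hy, ht]
  · simp [fpois, ht.le]

theorem fpois_of_neg (ht : t < 0) : fpois y t = ⊤ := by
  simp [fpois, not_lt_of_gt ht, not_le_of_gt ht]

theorem fpois_zero_le (ht : t ≤ 0) : fpois y 0 ≤ fpois y t := by
  rcases ht.lt_or_eq with ht | rfl
  · exact (fpois_of_neg ht).symm ▸ le_top
  · rfl

theorem tendsto_fpois_nhdsGT_zero (hy : 0 ≤ y) :
    Tendsto (fpois y) (𝓝[>] 0) (𝓝 (fpois y 0)) := by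
  have hEq : (fun t : ℝ => ((-y * Real.log t + t : ℝ) : EReal)) =ᶠ[𝓝[>] 0] fpois y :=
    eventually_nhdsWithin_of_forall fun t ht => (fpois_of_pos hy ht).symm
  refine Tendsto.congr' hEq ?_
  rcases hy.lt_or_eq with hy | rfl
  · rw [show fpois y 0 = ⊤ by simp [fpois, hy]]
    refine EReal.tendsto_coe_atTop.comp ?_
    exact (Real.tendsto_log_nhdsGT_zero.const_mul_atBot_of_neg (neg_lt_zero.2 hy)).atTop_add
      (tendsto_nhdsWithin_of_tendsto_nhds tendsto_id)
  · simpa [fpois] using (continuous_coe_real_ereal.tendsto 0).mono_left nhdsWithin_le_nhds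

theorem lowerSemicontinuous_fpois (hy : 0 ≤ y) : LowerSemicontinuous (fpois y) := by
  intro t
  rcases lt_trichotomy t 0 with ht | rfl | ht
  · have hEq : (fun _ => ⊤) =ᶠ[𝓝 t] fpois y :=
      (eventually_lt_nhds ht).mono fun s hs => (fpois_of_neg hs).symm
    exact (continuousAt_const.congr hEq).lowerSemicontinuousAt
  · exact lowerSemicontinuousAt_of_tendsto_nhdsGT (fun _ => fpois_zero_le)
      (tendsto_fpois_nhdsGT_zero hy)
  · have hEq : (fun s : ℝ => ((-y * Real.log s + s : ℝ) : EReal)) =ᶠ[𝓝 t] fpois y :=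
      (eventually_gt_nhds ht).mono fun s hs => (fpois_of_pos hy hs).symm
    have hcont : ContinuousAt (fun s : ℝ => ((-y * Real.log s + s : ℝ) : EReal)) t :=
      continuous_coe_real_ereal.continuousAt.comp
        ((continuousAt_const.mul (Real.continuousAt_log ht.ne')).add continuousAt_id)
    exact (hcont.congr hEq).lowerSemicontinuousAt

theorem Real.sub_mul_log_le_neg_mul_log_add (hy : 0 ≤ y) (ht : 0 < t) :
    y - y * Real.log y ≤ -y * Real.log t + t := by
  rcases hy.lt_or_eq with hy | rfl
  · have h := mul_le_mul_of_nonneg_left (Real.log_le_sub_one_of_pos (div_pos ht hy)) hy.le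
    rw [Real.log_div ht.ne' hy.ne', mul_sub_one, mul_div_cancel₀ t hy.ne'] at h
    linarith
  · simpa using ht.le

theorem le_fpois (hy : 0 ≤ y) (t : ℝ) : ((y - y * Real.log y : ℝ) : EReal) ≤ fpois y t := by
  rcases lt_or_ge 0 t with ht | ht
  · rw [fpois_of_pos hy ht, EReal.coe_le_coe_iff]
    exact Real.sub_mul_log_le_neg_mul_log_add hy ht
  · refine le_trans ?_ (fpois_zero_le ht)
    rcases hy.lt_or_eq with hy | rfl
    · simp [fpois, hy]
    · simp [fpois]

end Poisson

section Objective

variable {n L : ℕ} {y : Fin n → ℝ}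
  {H : EuclideanSpace ℝ (Fin n) →ₗ[ℝ] EuclideanSpace ℝ (Fin n)}
  {Φ : EuclideanSpace ℝ (Fin L) →ₗ[ℝ] EuclideanSpace ℝ (Fin n)} {γ : ℝ}
  {Ψ : EuclideanSpace ℝ (Fin L) → ℝ}

theorem lowerSemicontinuous_f1 (hy : ∀ i, 0 ≤ y i) : LowerSemicontinuous (f1 y) :=
  EReal.lowerSemicontinuous_sum fun i _ =>
    (lowerSemicontinuous_fpois (hy i)).comp (EuclideanSpace.proj i).continuous

theorem le_f1 (hy : ∀ i, 0 ≤ y i) (η : EuclideanSpace ℝ (Fin n)) :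
    ((∑ i, (y i - y i * Real.log (y i)) : ℝ) : EReal) ≤ f1 y η := by
  rw [EReal.coe_finset_sum]
  exact Finset.sum_le_sum fun i _ => le_fpois (hy i) _

theorem isClosed_nonneg_orthant : IsClosed {x : EuclideanSpace ℝ (Fin n) | ∀ i, 0 ≤ x i} := by
  simp only [ofPred_forall]
  exact isClosed_iInter fun i => isClosed_le continuous_const (EuclideanSpace.proj i).continuous

theorem lowerSemicontinuous_J (hy : ∀ i, 0 ≤ y i) (hΨ : Continuous Ψ) :
    LowerSemicontinuous (J y H Φ γ Ψ) := by
  have hΦ : Continuous Φ := Φ.continuous_of_finiteDimensional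
  have hH : Continuous H := H.continuous_of_finiteDimensional
  exact EReal.lowerSemicontinuous_fun_add
    (EReal.lowerSemicontinuous_fun_add ((lowerSemicontinuous_f1 hy).comp (hH.comp hΦ))
      (continuous_coe_real_ereal.comp (continuous_const.mul hΨ)).lowerSemicontinuous)
    (isClosed_nonneg_orthant.lowerSemicontinuous_indC.comp hΦ)

theorem le_J (hy : ∀ i, 0 ≤ y i) (α : EuclideanSpace ℝ (Fin L)) :
    ((∑ i, (y i - y i * Real.log (y i)) + γ * Ψ α : ℝ) : EReal) ≤ J y H Φ γ Ψ α := by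
  rw [EReal.coe_add, ← add_zero (_ + _)]
  exact add_le_add (add_le_add_left (le_f1 hy _) _) (indC_nonneg _ _)

end Objective

theorem J_attains_infimum_general (n L : ℕ) (y : Fin n → ℝ) (hy : ∀ i, 0 ≤ y i)
    (H : EuclideanSpace ℝ (Fin n) →ₗ[ℝ] EuclideanSpace ℝ (Fin n))
    (Φ : EuclideanSpace ℝ (Fin L) →ₗ[ℝ] EuclideanSpace ℝ (Fin n))
    (γ : ℝ) (hγ : 0 < γ) (Ψ : EuclideanSpace ℝ (Fin L) → ℝ)
    (hΨcont : Continuous Ψ)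
    (hΨcoercive : ∀ M : ℝ, ∃ R : ℝ, ∀ α : EuclideanSpace ℝ (Fin L), R < ‖α‖ → M < Ψ α)
    (hproper : ∃ α₀ : EuclideanSpace ℝ (Fin L), J y H Φ γ Ψ α₀ < ⊤) :
    ∃ αstar : EuclideanSpace ℝ (Fin L), J y H Φ γ Ψ αstar < ⊤ ∧
      ∀ α : EuclideanSpace ℝ (Fin L), J y H Φ γ Ψ αstar ≤ J y H Φ γ Ψ α := by
  obtain ⟨α₀, hα₀⟩ := hproper
  set c : ℝ := ∑ i, (y i - y i * Real.log (y i))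
  set B : ℝ := (J y H Φ γ Ψ α₀).toReal
  obtain ⟨R, hR⟩ := hΨcoercive ((B - c) / γ)
  have hfar : ∀ᶠ α in cocompact _, J y H Φ γ Ψ α₀ ≤ J y H Φ γ Ψ α := by
    filter_upwards [tendsto_norm_cocompact_atTop.eventually_gt_atTop R] with α hα
    have hBα : B ≤ c + γ * Ψ α := by
      have := (div_lt_iff₀' hγ).1 (hR α hα)
      linarith
    calc J y H Φ γ Ψ α₀ ≤ B := EReal.le_coe_toReal hα₀.ne
      _ ≤ ((c + γ * Ψ α : ℝ) : EReal) := EReal.coe_le_coe_iff.2 hBα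
      _ ≤ J y H Φ γ Ψ α := le_J hy α
  obtain ⟨αstar, hmin⟩ := (lowerSemicontinuous_J hy hΨcont).exists_forall_le' α₀ hfar
  exact ⟨αstar, (hmin α₀).trans_lt hα₀, hmin⟩

/-- If `Ψ` is continuous, nonnegative and coercive, and `J` is proper, then `J` attains
its infimum: there is `α*` with `J(α*) < +∞` and `J(α*) ≤ J(α)` for all `α`. -/
theorem J_attains_infimum (n L : ℕ) (y : Fin n → ℝ) (hy : ∀ i, 0 ≤ y i)
    (H : EuclideanSpace ℝ (Fin n) →ₗ[ℝ] EuclideanSpace ℝ (Fin n))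
    (Φ : EuclideanSpace ℝ (Fin L) →ₗ[ℝ] EuclideanSpace ℝ (Fin n))
    (γ : ℝ) (hγ : 0 < γ) (Ψ : EuclideanSpace ℝ (Fin L) → ℝ)
    (hΨcont : Continuous Ψ) (hΨnn : ∀ α, 0 ≤ Ψ α)
    (hΨcoercive : ∀ M : ℝ, ∃ R : ℝ, ∀ α : EuclideanSpace ℝ (Fin L), R < ‖α‖ → M < Ψ α)
    (hproper : ∃ α₀ : EuclideanSpace ℝ (Fin L), J y H Φ γ Ψ α₀ < ⊤) :
    ∃ αstar : EuclideanSpace ℝ (Fin L), J y H Φ γ Ψ αstar < ⊤ ∧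
      ∀ α : EuclideanSpace ℝ (Fin L), J y H Φ γ Ψ αstar ≤ J y H Φ γ Ψ α :=
  J_attains_infimum_general n L y hy H Φ γ hγ Ψ hΨcont hΨcoercive hproper
end

section
/- Let ψ : ℝ → ℝ be convex, even, nonnegative, nondecreasing on [0,+∞), with ψ(0) = 0, continuous on ℝ, twice differentiable on ℝ \ {0}, and with positive right derivative at zero ψ'₊(0) = lim_{h→0⁺} ψ(h)/h > 0. Let δ > 0 and β ∈ ℝ with |β| > δ·ψ'₊(0). Then the unique minimizer α̂ of t ↦ δψ(t) + (t - β)²/2 is nonzero, has the same sign as β, and satisfies α̂ = β - δ·ψ'(α̂). -/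
/-!
The objective `t ↦ δψ(t) + (t - β)²/2` is continuous and coercive, so it has a minimizer, and it
is strictly convex, so the minimizer is unique. Comparing the objective at `a` and `-a`, evenness of
`ψ` leaves `(a - β)² ≤ (a + β)²`, i.e. `a * β ≥ 0`. Minimality at `0` would give
`|β| - h/2 ≤ δψ(h)/h` for small `h > 0`, hence `|β| ≤ δψ'₊(0)`; so the minimizer is nonzero,
`ψ` is differentiable there, and Fermat's rule yields `a = β - δψ'(a)`.
-/

open Filter Set Topology

def IsProxPoint (f : ℝ → ℝ) (β a : ℝ) : Prop :=
  ∀ t, f a + (a - β) ^ 2 / 2 ≤ f t + (t - β) ^ 2 / 2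

lemma tendsto_sub_sq_div_two_cocompact (β : ℝ) :
    Tendsto (fun t : ℝ => (t - β) ^ 2 / 2) (cocompact ℝ) atTop := by
  have hnorm := tendsto_norm_cocompact_atTop.comp
    (Homeomorph.subRight β).isClosedEmbedding.tendsto_cocompact
  simpa [Function.comp_def, sq_abs] using
    ((tendsto_pow_atTop two_ne_zero).comp hnorm).atTop_div_const two_pos

lemma strictConvexOn_sub_sq_div_two (β : ℝ) :
    StrictConvexOn ℝ univ (fun t : ℝ => (t - β) ^ 2 / 2) := by
  refine ⟨convex_univ, fun x _ y _ hxy a b ha hb hab => ?_⟩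
  obtain rfl : b = 1 - a := by linarith
  have hxy' : 0 < (x - y) ^ 2 := by positivity [sub_ne_zero.2 hxy]
  simp only [smul_eq_mul]
  nlinarith [mul_pos (mul_pos ha hb) hxy']

lemma exists_isProxPoint {f : ℝ → ℝ} (hf : Continuous f) (hbdd : BddBelow (range f)) (β : ℝ) :
    ∃ a, IsProxPoint f β a := by
  obtain ⟨C, hC⟩ := hbdd
  have hco : Tendsto (fun t => f t + (t - β) ^ 2 / 2) (cocompact ℝ) atTop :=
    tendsto_atTop_add_left_of_le _ C (fun t => hC (mem_range_self t))
      (tendsto_sub_sq_div_two_cocompact β)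
  exact (hf.add ((continuous_sub_right β).pow 2 |>.div_const 2)).exists_forall_le hco

lemma ConvexOn.eq_of_isProxPoint {f : ℝ → ℝ} (hf : ConvexOn ℝ univ f) {β a b : ℝ}
    (ha : IsProxPoint f β a) (hb : IsProxPoint f β b) : a = b :=
  (hf.add_strictConvexOn (strictConvexOn_sub_sq_div_two β)).eq_of_isMinOn
    (isMinOn_univ_iff.2 ha) (isMinOn_univ_iff.2 hb) (mem_univ a) (mem_univ b)

lemma IsProxPoint.mul_nonneg_of_even {f : ℝ → ℝ} (heven : ∀ t, f (-t) = f t) {β a : ℝ}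
    (ha : IsProxPoint f β a) : 0 ≤ a * β := by
  have h := ha (-a)
  rw [heven] at h
  nlinarith

lemma not_isProxPoint_zero {f : ℝ → ℝ} (heven : ∀ t, f (-t) = f t) (hf0 : f 0 = 0) {c : ℝ}
    (hlim : Tendsto (fun h => f h / h) (𝓝[>] 0) (𝓝 c)) {β : ℝ} (hβ : c < |β|) :
    ¬ IsProxPoint f β 0 := by
  intro h0
  -- Testing minimality at `t = ±h`, with the sign of `β`, turns `(t - β)²` into `(h - |β|)²`.
  have hle : ∀ h > 0, |β| - h / 2 ≤ f h / h := by
    intro h hh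
    have htest : f 0 + (0 - β) ^ 2 / 2 ≤ f h + (h - |β|) ^ 2 / 2 := by
      rcases le_total 0 β with hβ0 | hβ0
      · rw [abs_of_nonneg hβ0]
        exact h0 h
      · have h0' := h0 (-h)
        rw [heven] at h0'
        rw [abs_of_nonpos hβ0]
        linarith [show (-h - β) ^ 2 = (h - -β) ^ 2 by ring]
    rw [le_div_iff₀ hh]
    nlinarith [sq_abs β]
  have hlim' : Tendsto (fun h => f h / h + h / 2) (𝓝[>] 0) (𝓝 c) := by
    simpa using hlim.add
      (((continuous_id.div_const 2).tendsto' 0 0 (by simp)).mono_left nhdsWithin_le_nhds)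
  have : |β| ≤ c := ge_of_tendsto hlim' <| eventually_nhdsWithin_of_forall fun h hh => by
    linarith [hle h hh]
  linarith

lemma IsProxPoint.eq_sub_deriv {f : ℝ → ℝ} {β a : ℝ} (ha : IsProxPoint f β a)
    (hf : DifferentiableAt ℝ f a) : a = β - deriv f a := by
  have hmin : IsLocalMin (fun t => f t + (t - β) ^ 2 / 2) a := Eventually.of_forall ha
  have hderiv : HasDerivAt (fun t => f t + (t - β) ^ 2 / 2) (deriv f a + (a - β)) a := by
    have hq : HasDerivAt (fun t => (t - β) ^ 2 / 2) (a - β) a := by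
      simpa using (((hasDerivAt_id a).sub_const β).pow 2).div_const 2
    exact hf.hasDerivAt.add hq
  linarith [hmin.hasDerivAt_eq_zero hderiv]

theorem prox_above_threshold_general (ψ : ℝ → ℝ)
    (hconv : ConvexOn ℝ Set.univ ψ)
    (heven : ∀ t, ψ (-t) = ψ t)
    (hnonneg : ∀ t, 0 ≤ ψ t)
    (hzero : ψ 0 = 0)
    (hcont : Continuous ψ)
    (hdiff : ∀ t : ℝ, t ≠ 0 → DifferentiableAt ℝ ψ t ∧ DifferentiableAt ℝ (deriv ψ) t)
    (d : ℝ) (hd : 0 < d)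
    (hright : Filter.Tendsto (fun h : ℝ => ψ h / h) (nhdsWithin 0 (Set.Ioi 0)) (nhds d))
    (δ : ℝ) (hδ : 0 < δ) (β : ℝ) (hβ : δ * d < |β|) :
    ∃ a : ℝ, (∀ t : ℝ, δ * ψ a + (a - β) ^ 2 / 2 ≤ δ * ψ t + (t - β) ^ 2 / 2) ∧
      (∀ b : ℝ, (∀ t : ℝ, δ * ψ b + (b - β) ^ 2 / 2 ≤ δ * ψ t + (t - β) ^ 2 / 2) → b = a) ∧
      a ≠ 0 ∧ 0 < a * β ∧ a = β - δ * deriv ψ a := by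
  set f : ℝ → ℝ := fun t => δ * ψ t
  have hf_even : ∀ t, f (-t) = f t := fun t => by simp only [f, heven]
  have hf_bdd : BddBelow (range f) :=
    ⟨0, by rintro _ ⟨t, rfl⟩; exact mul_nonneg hδ.le (hnonneg t)⟩
  have hf_lim : Tendsto (fun h => f h / h) (𝓝[>] 0) (𝓝 (δ * d)) := by
    simpa only [f, mul_div_assoc] using hright.const_mul δ
  obtain ⟨a, ha⟩ := exists_isProxPoint (continuous_const.mul hcont) hf_bdd β
  have ha0 : a ≠ 0 := by
    rintro rfl
    exact not_isProxPoint_zero hf_even (by simp [f, hzero]) hf_lim hβ ha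
  have hβ0 : β ≠ 0 := by
    rintro rfl
    rw [abs_zero] at hβ
    linarith [mul_pos hδ hd]
  have hψa : DifferentiableAt ℝ ψ a := (hdiff a ha0).1
  refine ⟨a, ha, fun b hb => (hconv.smul hδ.le).eq_of_isProxPoint hb ha, ha0,
    lt_of_le_of_ne (ha.mul_nonneg_of_even hf_even) (mul_ne_zero ha0 hβ0).symm, ?_⟩
  rw [← deriv_const_mul δ hψa]
  exact ha.eq_sub_deriv (hψa.const_mul δ)

/-- Above the threshold (Fadili–Starck): if `|β| > δ·ψ'₊(0)`, the unique minimizer `α̂`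
of `t ↦ δψ(t) + (t - β)²/2` is nonzero, has the same sign as `β`, and satisfies the
implicit equation `α̂ = β - δ·ψ'(α̂)`. -/
theorem prox_above_threshold (ψ : ℝ → ℝ)
    (hconv : ConvexOn ℝ Set.univ ψ)
    (heven : ∀ t, ψ (-t) = ψ t)
    (hnonneg : ∀ t, 0 ≤ ψ t)
    (hmono : MonotoneOn ψ (Set.Ici (0 : ℝ)))
    (hzero : ψ 0 = 0)
    (hcont : Continuous ψ)
    (hdiff : ∀ t : ℝ, t ≠ 0 → DifferentiableAt ℝ ψ t ∧ DifferentiableAt ℝ (deriv ψ) t)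
    (d : ℝ) (hd : 0 < d)
    (hright : Filter.Tendsto (fun h : ℝ => ψ h / h) (nhdsWithin 0 (Set.Ioi 0)) (nhds d))
    (δ : ℝ) (hδ : 0 < δ) (β : ℝ) (hβ : δ * d < |β|) :
    ∃ a : ℝ, (∀ t : ℝ, δ * ψ a + (a - β) ^ 2 / 2 ≤ δ * ψ t + (t - β) ^ 2 / 2) ∧
      (∀ b : ℝ, (∀ t : ℝ, δ * ψ b + (b - β) ^ 2 / 2 ≤ δ * ψ t + (t - β) ^ 2 / 2) → b = a) ∧
      a ≠ 0 ∧ 0 < a * β ∧ a = β - δ * deriv ψ a :=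
  prox_above_threshold_general ψ hconv heven hnonneg hzero hcont hdiff d hd hright δ hδ β hβ
end
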